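/- arXiv:1302.7044 — 2 statements merged into one kernel-verified Lean document; each statement's English description precedes it below -/
import Mathlib

section
/- If u is a C¹ solution of div(σ∇u) = 0 in Ω with σ = cσ₀ (c > 0, σ₀ positive definite, both Hölder continuous) and |∇u| > 0 a.e., and g_{ij} = (det(σ₀)|J|²_{σ₀⁻¹})^{1/(n-1)} (σ₀⁻¹)_{ij} with J = -σ∇u, then div( √(det g) · (g⁻¹∇u)/‖g⁻¹∇u‖_g ) = 0 in Ω (weakly); i.e. the level sets of u are zero-mean-curvature hypersurfaces in the Riemannian metric g. -/
/-!
The metric `g = λ σ₀⁻¹` is conformal to `σ₀⁻¹`, with `λ = (det σ₀ · |J|²_{σ₀⁻¹})^{1/(n-1)}`.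
Hence `g⁻¹∇u = λ⁻¹ σ₀∇u`, `‖g⁻¹∇u‖_g² = λ⁻¹ ∇u·σ₀∇u` and `√(det g) = λ^{n/2} / √(det σ₀)`,
and since `|J|²_{σ₀⁻¹} = c² ∇u·σ₀∇u`, the exponent `1/(n-1)` makes these factors combine to
exactly `c`: pointwise, `√(det g) · g⁻¹∇u / ‖g⁻¹∇u‖_g = σ∇u` wherever `∇u ≠ 0` and `c > 0`.
The claimed weak equation is therefore the weak form of `div(σ∇u) = 0`.
-/

open Matrix MeasureTheory

noncomputable def grad {n : ℕ} (u : (Fin n → ℝ) → ℝ) (x : Fin n → ℝ) : Fin n → ℝ :=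
  fun i => fderiv ℝ u x (Pi.single i 1)

namespace Matrix

variable {m K : Type*} [Fintype m] [DecidableEq m]

theorem mulVec_nonsing_inv_mulVec [CommRing K] {A : Matrix m m K} (hA : IsUnit A.det)
    (v : m → K) : A *ᵥ (A⁻¹ *ᵥ v) = v := by
  rw [mulVec_mulVec, mul_nonsing_inv A hA, one_mulVec]

theorem nonsing_inv_mulVec_mulVec [CommRing K] {A : Matrix m m K} (hA : IsUnit A.det)
    (v : m → K) : A⁻¹ *ᵥ (A *ᵥ v) = v := by
  rw [mulVec_mulVec, nonsing_inv_mul A hA, one_mulVec]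

theorem inv_smul_nonsing_inv [Field K] {A : Matrix m m K} (hA : IsUnit A.det) {k : K}
    (hk : k ≠ 0) : (k • A⁻¹)⁻¹ = k⁻¹ • A :=
  inv_eq_right_inv <| by
    rw [smul_mul_smul_comm, nonsing_inv_mul A hA, mul_inv_cancel₀ hk, one_smul]

theorem det_smul_nonsing_inv [Field K] (A : Matrix m m K) (k : K) :
    (k • A⁻¹).det = k ^ Fintype.card m / A.det := by
  rw [det_smul, det_nonsing_inv, Ring.inverse_eq_inv, div_eq_mul_inv]

theorem nonsing_inv_mulVec_dotProduct_neg_smul_mulVec [CommRing K] {A : Matrix m m K}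
    (hA : IsUnit A.det) (c : K) (v : m → K) :
    (A⁻¹ *ᵥ -(c • (A *ᵥ v))) ⬝ᵥ -(c • (A *ᵥ v)) = c ^ 2 * (v ⬝ᵥ (A *ᵥ v)) := by
  rw [mulVec_neg, mulVec_smul, nonsing_inv_mulVec_mulVec hA, neg_dotProduct_neg,
    smul_dotProduct, dotProduct_smul, smul_eq_mul, smul_eq_mul, sq, mul_assoc]

theorem sqrt_det_smul_unit_normal_of_eq_smul_nonsing_inv {A g : Matrix m m ℝ}
    (hA : IsUnit A.det) {k : ℝ} (hk : k ≠ 0) (hg : g = k • A⁻¹) (v : m → ℝ) :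
    √g.det • ((√((g *ᵥ (g⁻¹ *ᵥ v)) ⬝ᵥ (g⁻¹ *ᵥ v)))⁻¹ • (g⁻¹ *ᵥ v))
      = (√(k ^ Fintype.card m / A.det) / (√(k⁻¹ * (v ⬝ᵥ (A *ᵥ v))) * k)) • (A *ᵥ v) := by
  have hg_unit : IsUnit g.det := by
    rw [hg, det_smul_nonsing_inv]
    exact (div_ne_zero (pow_ne_zero _ hk) hA.ne_zero).isUnit
  have hg_inv : g⁻¹ = k⁻¹ • A := by rw [hg, inv_smul_nonsing_inv hA hk]
  rw [mulVec_nonsing_inv_mulVec hg_unit, hg_inv, smul_mulVec, dotProduct_smul, smul_eq_mul,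
    smul_smul, smul_smul, hg, det_smul_nonsing_inv, mul_assoc, ← mul_inv, ← div_eq_mul_inv]

end Matrix

theorem Real.sqrt_div_sqrt_mul_eq_of_pow_sub_one_eq {N : ℕ} (hN : N ≠ 0) {k d q c : ℝ}
    (hk : 0 < k) (hd : 0 < d) (hq : 0 < q) (hc : 0 ≤ c)
    (hpow : k ^ (N - 1) = d * (c ^ 2 * q)) :
    √(k ^ N / d) / (√(k⁻¹ * q) * k) = c := by
  have hsq : k ^ N / d / (k⁻¹ * q * k ^ 2) = c ^ 2 := by
    rw [← pow_sub_one_mul hN, hpow]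
    field_simp
  calc √(k ^ N / d) / (√(k⁻¹ * q) * k) = √(k ^ N / d) / (√(k⁻¹ * q) * √(k ^ 2)) := by
        rw [Real.sqrt_sq hk.le]
    _ = √(k ^ N / d / (k⁻¹ * q * k ^ 2)) := by
        rw [← Real.sqrt_mul (by positivity), ← Real.sqrt_div' _ (by positivity)]
    _ = c := by rw [hsq, Real.sqrt_sq hc]

theorem Real.rpow_one_div_sub_one_pow {n : ℕ} (hn : 2 ≤ n) {b : ℝ} (hb : 0 ≤ b) :
    (b ^ (1 / ((n : ℝ) - 1))) ^ (n - 1) = b := by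
  have hcast : ((n - 1 : ℕ) : ℝ) = (n : ℝ) - 1 := by
    rw [Nat.cast_sub (by omega), Nat.cast_one]
  rw [← hcast, one_div, Real.rpow_inv_natCast_pow hb (by omega)]

theorem level_set_normal_eq_flux {n : ℕ} (hn : 2 ≤ n) {A g : Matrix (Fin n) (Fin n) ℝ}
    (hA : A.PosDef) {c : ℝ} (hc : 0 < c) {v : Fin n → ℝ} (hv : v ≠ 0)
    (hg : g = (A.det * ((A⁻¹ *ᵥ -(c • (A *ᵥ v))) ⬝ᵥ -(c • (A *ᵥ v)))) ^
      ((1 : ℝ) / ((n : ℝ) - 1)) • A⁻¹) :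
    √g.det • ((√((g *ᵥ (g⁻¹ *ᵥ v)) ⬝ᵥ (g⁻¹ *ᵥ v)))⁻¹ • (g⁻¹ *ᵥ v)) = c • (A *ᵥ v) := by
  have hdet : 0 < A.det := hA.det_pos
  have hq : 0 < v ⬝ᵥ (A *ᵥ v) := hA.dotProduct_mulVec_pos hv
  rw [nonsing_inv_mulVec_dotProduct_neg_smul_mulVec hdet.ne'.isUnit] at hg
  have hb : 0 < A.det * (c ^ 2 * (v ⬝ᵥ (A *ᵥ v))) := by positivity
  have hk := Real.rpow_pos_of_pos hb (1 / ((n : ℝ) - 1))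
  rw [sqrt_det_smul_unit_normal_of_eq_smul_nonsing_inv hdet.ne'.isUnit hk.ne' hg,
    Fintype.card_fin, Real.sqrt_div_sqrt_mul_eq_of_pow_sub_one_eq (by omega) hk hdet hq hc.le
      (Real.rpow_one_div_sub_one_pow hn hb.le)]

theorem level_sets_zero_mean_curvature_general {n : ℕ} (hn : 2 ≤ n)
    (Ω : Set (Fin n → ℝ)) (hΩo : IsOpen Ω)
    (c : (Fin n → ℝ) → ℝ)
    (hcpos : ∀ᵐ x ∂(volume.restrict Ω), 0 < c x)
    (σ₀ : (Fin n → ℝ) → Matrix (Fin n) (Fin n) ℝ)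
    (hσpd : ∀ x ∈ Ω, (σ₀ x).PosDef)
    (u : (Fin n → ℝ) → ℝ)
    (hu0 : ∀ᵐ x ∂(volume.restrict Ω), grad u x ≠ 0)
    (hweak : ∀ φ : (Fin n → ℝ) → ℝ, ContDiff ℝ 1 φ → HasCompactSupport φ →
      tsupport φ ⊆ Ω →
      ∫ x in Ω, ((c x • (σ₀ x *ᵥ grad u x)) ⬝ᵥ grad φ x) = 0)
    (J : (Fin n → ℝ) → (Fin n → ℝ))
    (hJ : ∀ x ∈ Ω, J x = -(c x • (σ₀ x *ᵥ grad u x)))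
    (g : (Fin n → ℝ) → Matrix (Fin n) (Fin n) ℝ)
    (hgdef : ∀ x ∈ Ω, g x =
      ((σ₀ x).det * (((σ₀ x)⁻¹ *ᵥ J x) ⬝ᵥ J x)) ^ ((1 : ℝ) / ((n : ℝ) - 1)) • (σ₀ x)⁻¹) :
    ∀ φ : (Fin n → ℝ) → ℝ, ContDiff ℝ 1 φ → HasCompactSupport φ → tsupport φ ⊆ Ω →
      ∫ x in Ω,
        ((Real.sqrt (g x).det •
            ((Real.sqrt (((g x) *ᵥ ((g x)⁻¹ *ᵥ grad u x)) ⬝ᵥ ((g x)⁻¹ *ᵥ grad u x)))⁻¹ •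
              ((g x)⁻¹ *ᵥ grad u x))) ⬝ᵥ grad φ x) = 0 := by
  intro φ hφ hφ_supp hφ_Ω
  rw [← hweak φ hφ hφ_supp hφ_Ω]
  refine setIntegral_congr_ae hΩo.measurableSet ?_
  filter_upwards [(ae_restrict_iff' hΩo.measurableSet).mp hcpos,
    (ae_restrict_iff' hΩo.measurableSet).mp hu0] with x hcx hux hx
  rw [level_set_normal_eq_flux hn (hσpd x hx) (hcx hx) (hux hx) (by rw [hgdef x hx, hJ x hx])]

/-- If `u ∈ C¹` weakly solves `div(σ∇u)=0` in `Ω` with `σ = cσ₀`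
(`c > 0`, `σ₀` symmetric positive definite, Hölder continuous), `|∇u| > 0` a.e.,
`J = -σ∇u` and `g = (det σ₀ · |J|²_{σ₀⁻¹})^{1/(n-1)} σ₀⁻¹`, then
`div(√(det g) · g⁻¹∇u / ‖g⁻¹∇u‖_g) = 0` weakly in `Ω`: the level sets of `u`
are zero-mean-curvature hypersurfaces in the Riemannian metric `g`. -/
theorem level_sets_zero_mean_curvature {n : ℕ} (hn : 2 ≤ n)
    (Ω : Set (Fin n → ℝ)) (hΩo : IsOpen Ω) (hΩb : Bornology.IsBounded Ω)
    (c : (Fin n → ℝ) → ℝ) (hcc : ContinuousOn c Ω)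
    (hcpos : ∀ᵐ x ∂(volume.restrict Ω), 0 < c x)
    (σ₀ : (Fin n → ℝ) → Matrix (Fin n) (Fin n) ℝ) (hσc : ContinuousOn σ₀ Ω)
    (hσsym : ∀ x ∈ Ω, (σ₀ x).IsSymm) (hσpd : ∀ x ∈ Ω, (σ₀ x).PosDef)
    (u : (Fin n → ℝ) → ℝ) (hud : DifferentiableOn ℝ u Ω)
    (hgc : ContinuousOn (grad u) Ω)
    (hu0 : ∀ᵐ x ∂(volume.restrict Ω), grad u x ≠ 0)
    (hweak : ∀ φ : (Fin n → ℝ) → ℝ, ContDiff ℝ 1 φ → HasCompactSupport φ →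
      tsupport φ ⊆ Ω →
      ∫ x in Ω, ((c x • (σ₀ x *ᵥ grad u x)) ⬝ᵥ grad φ x) = 0)
    (J : (Fin n → ℝ) → (Fin n → ℝ))
    (hJ : ∀ x ∈ Ω, J x = -(c x • (σ₀ x *ᵥ grad u x)))
    (g : (Fin n → ℝ) → Matrix (Fin n) (Fin n) ℝ)
    (hgdef : ∀ x ∈ Ω, g x =
      ((σ₀ x).det * (((σ₀ x)⁻¹ *ᵥ J x) ⬝ᵥ J x)) ^ ((1 : ℝ) / ((n : ℝ) - 1)) • (σ₀ x)⁻¹) :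
    ∀ φ : (Fin n → ℝ) → ℝ, ContDiff ℝ 1 φ → HasCompactSupport φ → tsupport φ ⊆ Ω →
      ∫ x in Ω,
        ((Real.sqrt (g x).det •
            ((Real.sqrt (((g x) *ᵥ ((g x)⁻¹ *ᵥ grad u x)) ⬝ᵥ ((g x)⁻¹ *ᵥ grad u x)))⁻¹ •
              ((g x)⁻¹ *ᵥ grad u x))) ⬝ᵥ grad φ x) = 0 :=
  level_sets_zero_mean_curvature_general hn Ω hΩo c hcpos σ₀ hσpd u hu0 hweak J hJ g hgdef
end

section
/- Let Π be a compact connected hypersurface (closed set) contained in the open bounded connected set Ω ⊂ ℝⁿ with connected boundary ∂Ω, such that Π ∩ ∂Ω = ∅ and Π is the boundary portion of a level set separating Ω. Then, under the Alexander duality argument: if Π ∪ ∂Ω disconnects ℝⁿ into open connected components O₁, O₂ and the unbounded exterior ℝⁿ \ Ω̄, then (∂O₁ ∪ ∂O₂) ∩ Π ≠ ∅. Consequently every connected component of (almost every) level-set boundary ∂E_t of a minimizer must intersect ∂Ω. -/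
open Set

/-! A frontier point `q` of the compact set `Π` exists because `ℝⁿ` is connected and not compact.
It lies in `Π ⊆ Ω`, and every neighbourhood of `q` inside the open set `Ω` meets `Ω \ Π`,
which the decomposition places in `O₁ ∪ O₂`; as `q ∉ O₁ ∪ O₂`, the point `q` is on the
frontier of `O₁ ∪ O₂`, hence on that of `O₁` or of `O₂`. -/

theorem frontier_subset_frontier_of_diff_subset {X : Type*} [TopologicalSpace X]
    {P Ω O : Set X} (hP : IsClosed P) (hΩ : IsOpen Ω) (hPΩ : P ⊆ Ω) (hPO : Disjoint P O)
    (hΩO : Ω \ P ⊆ O) : frontier P ⊆ frontier O := by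
  intro q hq
  have hqP : q ∈ P := hP.frontier_subset hq
  have hq_compl : q ∈ closure Pᶜ := (frontier_eq_closure_inter_closure (s := P) ▸ hq).2
  have hq_diff : q ∈ closure (Ω \ P) := hΩ.inter_closure ⟨hPΩ hqP, hq_compl⟩
  exact ⟨closure_mono hΩO hq_diff, fun h => hPO.notMem_of_mem_left hqP (interior_subset h)⟩

theorem alexander_duality_level_sets_general {n : ℕ} (hn : 2 ≤ n)
    (Ω : Set (Fin n → ℝ)) (hΩo : IsOpen Ω)
    (Pi_t : Set (Fin n → ℝ)) (hPicp : IsCompact Pi_t) (hPiconn : IsConnected Pi_t)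
    (hPiΩ : Pi_t ⊆ Ω)
    (O₁ O₂ : Set (Fin n → ℝ))
    (hdecomp : (Pi_t ∪ frontier Ω)ᶜ = O₁ ∪ O₂ ∪ (closure Ω)ᶜ) :
    ((frontier O₁ ∪ frontier O₂) ∩ Pi_t).Nonempty := by
  have : Nonempty (Fin n) := ⟨⟨0, by omega⟩⟩
  obtain ⟨q, hq⟩ := nonempty_frontier_iff.2 ⟨hPiconn.nonempty, hPicp.ne_univ⟩
  have hO : O₁ ∪ O₂ ⊆ (Pi_t ∪ frontier Ω)ᶜ := hdecomp ▸ subset_union_left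
  have hdisj : Disjoint Pi_t (O₁ ∪ O₂) :=
    ((subset_compl_iff_disjoint_right.1 hO).mono_right subset_union_left).symm
  have hdiff : Ω \ Pi_t ⊆ O₁ ∪ O₂ := by
    rintro x ⟨hxΩ, hxPi⟩
    have hx : x ∈ (Pi_t ∪ frontier Ω)ᶜ := by
      rintro (h | h)
      · exact hxPi h
      · exact (hΩo.inter_frontier_eq.subset ⟨hxΩ, h⟩ : x ∈ (∅ : Set _))
    rw [hdecomp] at hx
    exact hx.resolve_right (not_not_intro (subset_closure hxΩ))
  have hqO := frontier_subset_frontier_of_diff_subset hPicp.isClosed hΩo hPiΩ hdisj hdiff hq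
  exact ⟨q, union_subset_union inter_subset_left inter_subset_right
    (frontier_union_subset _ _ hqO), hPicp.isClosed.frontier_subset hq⟩

/-- (Alexander duality argument.) Let `Ω ⊂ ℝⁿ` be a bounded domain
with connected boundary and `Π ⊆ Ω` a compact connected hypersurface (a connected
component of a level-set boundary) with `Π ∩ ∂Ω = ∅`. If `Π ∪ ∂Ω` disconnects `ℝⁿ`
into open connected pieces `O₁`, `O₂` and the exterior `ℝⁿ \ Ω̄`, then
`(∂O₁ ∪ ∂O₂) ∩ Π ≠ ∅`; this is the contradiction showing that every connected
component of (almost every) level-set boundary must intersect `∂Ω`. -/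
theorem alexander_duality_level_sets {n : ℕ} (hn : 2 ≤ n)
    (Ω : Set (Fin n → ℝ)) (hΩo : IsOpen Ω) (hΩb : Bornology.IsBounded Ω)
    (hΩc : IsConnected Ω) (hbd : IsConnected (frontier Ω))
    (Pi_t : Set (Fin n → ℝ)) (hPicp : IsCompact Pi_t) (hPiconn : IsConnected Pi_t)
    (hPiΩ : Pi_t ⊆ Ω) (hPibd : Pi_t ∩ frontier Ω = ∅)
    (O₁ O₂ : Set (Fin n → ℝ)) (h1o : IsOpen O₁) (h2o : IsOpen O₂)
    (h1c : IsConnected O₁) (h2c : IsConnected O₂)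
    (hdisj : Disjoint O₁ O₂) (h1Ω : O₁ ⊆ Ω) (h2Ω : O₂ ⊆ Ω)
    (hdecomp : (Pi_t ∪ frontier Ω)ᶜ = O₁ ∪ O₂ ∪ (closure Ω)ᶜ) :
    ((frontier O₁ ∪ frontier O₂) ∩ Pi_t).Nonempty :=
  alexander_duality_level_sets_general hn Ω hΩo Pi_t hPicp hPiconn hPiΩ O₁ O₂ hdecomp
end
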